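/- For a Fitch map ε, the triple set R(ε) = ⋃_{N ∈ N[ε]} { ab|c : a,b ∈ N, c ∈ X∖N } is closed under triple closure, i.e., the closure of R(ε) (the set of triples displayed by every tree displaying R(ε)) equals R(ε) itself. -/

import Mathlib

/-- A finite rooted phylogenetic tree on leaf set `X`, with vertex type `V`.
Vertices are encoded via a parent function; `par root = root`. -/
structure PhyloTree (V X : Type) : Type where
  fin : Finite V
  root : V
  par : V → V
  par_root : par root = root
  reach : ∀ v : V, ∃ n : ℕ, par^[n] v = root
  leaf : X → V
  leaf_inj : Function.Injective leaf
  leaf_isLeaf : ∀ (x : X) (u : V), par u = leaf x → u = leaf x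
  leaf_only : ∀ v : V, (∀ u : V, par u = v → u = v) → ∃ x : X, leaf x = v
  root_deg : (∃ x : X, leaf x = root) ∨ 2 ≤ {u : V | par u = root ∧ u ≠ root}.ncard
  inner_deg : ∀ v : V, v ≠ root → (¬ ∃ x : X, leaf x = v) →
      2 ≤ {u : V | par u = v ∧ u ≠ v}.ncard

namespace PhyloTree

variable {V X : Type}

/-- `T.anc u v` : `u` is an ancestor of `v`, i.e. `u ⪯_T v`. -/
def anc (T : PhyloTree V X) (u v : V) : Prop := ∃ n : ℕ, T.par^[n] v = u

/-- `l` is the last common ancestor of `a` and `b`. -/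
def IsLca (T : PhyloTree V X) (l a b : V) : Prop :=
  T.anc l a ∧ T.anc l b ∧ ∀ u : V, T.anc u a → T.anc u b → T.anc u l

/-- The cluster of `v`: the set of leaves below `v`. -/
def cluster (T : PhyloTree V X) (v : V) : Set X := {x : X | T.anc v (T.leaf x)}

/-- The cluster set `C(T)`. -/
def clusterSet (T : PhyloTree V X) : Set (Set X) := {S : Set X | ∃ v : V, S = T.cluster v}

/-- The edge `(par u, u)` lies on the descending path from `a` down to `b`. -/
def edgeOnDown (T : PhyloTree V X) (a b u : V) : Prop :=
  T.anc a u ∧ u ≠ a ∧ T.anc u b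

/-- The edge `(par u, u)` lies on the unique path between `v` and `w`. -/
def edgeOnPath (T : PhyloTree V X) (v w u : V) : Prop :=
  ∃ l : V, T.IsLca l v w ∧ (T.edgeOnDown l v u ∨ T.edgeOnDown l w u)

/-- `T` displays the rooted triple `ab|c`. -/
def Displays (T : PhyloTree V X) (a b c : X) : Prop :=
  ∃ l3 l2 : V, T.IsLca l2 (T.leaf a) (T.leaf b) ∧
    T.IsLca l3 l2 (T.leaf c) ∧ l3 ≠ l2

end PhyloTree

/-- `(T, lab)` explains `ε` : for distinct leaves `x,y`, `m ∈ ε x y` iff there is an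
`m`-edge on the path from `lca(x,y)` down to `y`. -/
def Explains {V X M : Type} (T : PhyloTree V X) (lab : V → Set M)
    (ε : X → X → Set M) : Prop :=
  ∀ x y : X, x ≠ y → ∀ m : M,
    (m ∈ ε x y ↔ ∃ l : V, T.IsLca l (T.leaf x) (T.leaf y) ∧
      ∃ u : V, T.edgeOnDown l (T.leaf y) u ∧ m ∈ lab u)

/-- `ε` is a Fitch map: it is explained by some edge-labeled phylogenetic tree. -/
def IsFitchMap {X M : Type} (ε : X → X → Set M) : Prop :=
  ∃ (V : Type) (T : PhyloTree V X) (lab : V → Set M), Explains T lab ε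

/-- The complementary neighborhood `N_{¬m}[y]`. -/
def Nbr {X M : Type} (ε : X → X → Set M) (m : M) (y : X) : Set X :=
  {x : X | x ≠ y ∧ m ∉ ε x y} ∪ {y}

/-- The collection `N[ε]` of all complementary neighborhoods. -/
def NbrSet {X M : Type} (ε : X → X → Set M) : Set (Set X) :=
  {N : Set X | ∃ (m : M) (y : X), N = Nbr ε m y}

/-- A set system is hierarchy-like if any two members intersect in `∅` or one of them. -/
def HLike {X : Type} (H : Set (Set X)) : Prop :=
  ∀ P ∈ H, ∀ Q ∈ H, P ∩ Q = P ∨ P ∩ Q = Q ∨ P ∩ Q = ∅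

/-- The inequality condition (IC). -/
def IneqCond {X M : Type} (ε : X → X → Set M) : Prop :=
  ∀ (m : M) (y y' : X), y' ∈ Nbr ε m y → (Nbr ε m y').ncard ≤ (Nbr ε m y).ncard


/-- The triple relation `R(ε)`: `ab|c ∈ R(ε)`. -/
def TripleRel {X M : Type} (ε : X → X → Set M) (a b c : X) : Prop :=
  a ≠ b ∧ ∃ N ∈ NbrSet ε, a ∈ N ∧ b ∈ N ∧ c ∉ N

/-!
Each complementary neighbourhood `N_{¬m}[y]` of a Fitch map is a cluster of the explaining
tree, namely the cluster below the lowest `m`-labelled edge above `y` (or of the root). Hence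
`N[ε]`, completed by `X` and the singletons, is a hierarchy, and the tree whose clusters are
exactly the members of this hierarchy displays `R(ε)`. A triple `ab|c` displayed by that tree
is separated by one of its clusters; with `a ≠ b` that cluster is neither `X` nor a singleton,
so it lies in `N[ε]` and `ab|c ∈ R(ε)`.
-/

namespace PhyloTree

variable {V X : Type} (T : PhyloTree V X)

lemma anc_refl (v : V) : T.anc v v := ⟨0, rfl⟩

variable {T} in
lemma anc_trans {u v w : V} (h₁ : T.anc u v) (h₂ : T.anc v w) : T.anc u w := by
  obtain ⟨n, rfl⟩ := h₁
  obtain ⟨m, rfl⟩ := h₂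
  exact ⟨n + m, Function.iterate_add_apply ..⟩

lemma anc_root (v : V) : T.anc T.root v := T.reach v

lemma iterate_par_root (n : ℕ) : T.par^[n] T.root = T.root :=
  Function.iterate_fixed T.par_root n

lemma eq_root_of_isPeriodicPt {w : V} {p : ℕ} (hw : Function.IsPeriodicPt T.par p w)
    (hp : 0 < p) : w = T.root := by
  obtain ⟨r, hr⟩ := T.reach w
  obtain ⟨d, hd⟩ := Nat.exists_eq_add_of_le (Nat.le_mul_of_pos_right r hp)
  have hw' : T.par^[r * p] w = w := hw.const_mul r
  rw [hd, add_comm, Function.iterate_add_apply, hr, iterate_par_root] at hw'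
  exact hw'.symm

variable {T} in
lemma anc_antisymm {u v : V} (h₁ : T.anc u v) (h₂ : T.anc v u) : u = v := by
  obtain ⟨n, rfl⟩ := h₁
  obtain ⟨m, hm⟩ := h₂
  rcases Nat.eq_zero_or_pos (n + m) with h | h
  · rw [(Nat.add_eq_zero_iff.mp h).1]; rfl
  · have hv : Function.IsPeriodicPt T.par (n + m) v := by
      rw [Function.IsPeriodicPt, Function.IsFixedPt, add_comm, Function.iterate_add_apply, hm]
    have hv_root := T.eq_root_of_isPeriodicPt hv h
    rw [hv_root, iterate_par_root]

variable {T} in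
lemma anc_total_of_anc {u w v : V} (hu : T.anc u v) (hw : T.anc w v) :
    T.anc u w ∨ T.anc w u := by
  obtain ⟨n, rfl⟩ := hu
  obtain ⟨m, rfl⟩ := hw
  rcases Nat.le_total n m with h | h
  · obtain ⟨d, rfl⟩ := Nat.exists_eq_add_of_le h
    exact .inr ⟨d, by rw [add_comm, Function.iterate_add_apply]⟩
  · obtain ⟨d, rfl⟩ := Nat.exists_eq_add_of_le h
    exact .inl ⟨d, by rw [add_comm, Function.iterate_add_apply]⟩

lemma exists_lowest_anc (P : V → Prop) (w : V) :
    ∃ v, T.anc v w ∧ (P v ∨ v = T.root) ∧ ∀ u, T.anc u w → P u → T.anc u v := by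
  classical
  have hex : ∃ n, P (T.par^[n] w) ∨ T.par^[n] w = T.root :=
    (T.reach w).imp fun _ => .inr
  refine ⟨_, ⟨_, rfl⟩, Nat.find_spec hex, ?_⟩
  rintro _ ⟨j, rfl⟩ hP
  obtain ⟨d, hd⟩ := Nat.exists_eq_add_of_le (Nat.find_min' hex (.inl hP))
  exact ⟨d, by rw [← Function.iterate_add_apply, hd, add_comm]⟩

lemma exists_isLca (a b : V) : ∃ l, T.IsLca l a b := by
  classical
  have hex : ∃ n, T.anc (T.par^[n] b) a := (T.reach b).imp fun _ h => by rw [h]; exact T.anc_root a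
  refine ⟨_, Nat.find_spec hex, ⟨_, rfl⟩, ?_⟩
  rintro u hua ⟨j, rfl⟩
  obtain ⟨d, rfl⟩ := Nat.exists_eq_add_of_le (not_lt.mp fun h => Nat.find_min hex h hua)
  exact ⟨d, by rw [add_comm, Function.iterate_add_apply]⟩

variable {T} in
lemma IsLca.unique {l l' a b : V} (h : T.IsLca l a b) (h' : T.IsLca l' a b) : l = l' :=
  anc_antisymm (h'.2.2 l h.1 h.2.1) (h.2.2 l' h'.1 h'.2.1)

lemma displays_iff_exists_cluster (a b c : X) :
    T.Displays a b c ↔ ∃ v, a ∈ T.cluster v ∧ b ∈ T.cluster v ∧ c ∉ T.cluster v := by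
  constructor
  · rintro ⟨l₃, l₂, h₂, h₃, hne⟩
    refine ⟨l₂, h₂.1, h₂.2.1, fun hc => hne (h₃.unique ⟨T.anc_refl l₂, hc, fun _ h _ => h⟩)⟩
  · rintro ⟨v, ha, hb, hc⟩
    obtain ⟨l₂, h₂⟩ := T.exists_isLca (T.leaf a) (T.leaf b)
    obtain ⟨l₃, h₃⟩ := T.exists_isLca l₂ (T.leaf c)
    exact ⟨l₃, l₂, h₂, h₃, fun heq => hc (anc_trans (h₂.2.2 v ha hb) (heq ▸ h₃.2.1))⟩

lemma eq_leaf_of_iterate_par_eq {x : X} {w : V} {n : ℕ} (h : T.par^[n] w = T.leaf x) :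
    w = T.leaf x := by
  induction n generalizing w with
  | zero => exact h
  | succ n ih => exact T.leaf_isLeaf x w (ih (by rwa [Function.iterate_succ_apply] at h))

lemma cluster_leaf (x : X) : T.cluster (T.leaf x) = {x} := by
  ext z
  exact ⟨fun ⟨_, hn⟩ => T.leaf_inj (T.eq_leaf_of_iterate_par_eq hn), fun hz => hz ▸ T.anc_refl _⟩

lemma cluster_root : T.cluster T.root = Set.univ :=
  Set.eq_univ_of_forall fun _ => T.anc_root _

lemma cluster_subset_or_subset {u v : V} (h : (T.cluster u ∩ T.cluster v).Nonempty) :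
    T.cluster u ⊆ T.cluster v ∨ T.cluster v ⊆ T.cluster u := by
  obtain ⟨x, hxu, hxv⟩ := h
  exact (anc_total_of_anc hxu hxv).symm.imp (fun h _ hy => anc_trans h hy)
    (fun h _ hy => anc_trans h hy)

lemma finite_leaves (T : PhyloTree V X) : Finite X :=
  haveI := T.fin
  Finite.of_injective T.leaf T.leaf_inj

end PhyloTree

structure IsHierarchy {X : Type} (H : Set (Set X)) : Prop where
  nonempty : ∀ S ∈ H, S.Nonempty
  univ_mem : Set.univ ∈ H
  singleton_mem : ∀ x : X, {x} ∈ H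
  subset_or_subset : ∀ S ∈ H, ∀ S' ∈ H, (S ∩ S').Nonempty → S ⊆ S' ∨ S' ⊆ S

namespace IsHierarchy

variable {X : Type} [Finite X] {H : Set (Set X)} (hH : IsHierarchy H)
include hH

lemma exists_least_ssuperset {S : Set X} (hS : S ∈ H) (hS_univ : S ≠ Set.univ) :
    ∃ P ∈ H, S ⊂ P ∧ ∀ Q ∈ H, S ⊂ Q → P ⊆ Q := by
  obtain ⟨P, ⟨hP, hSP⟩, hPmin⟩ := Set.toFinite {P | P ∈ H ∧ S ⊂ P} |>.exists_minimal
    ⟨Set.univ, hH.univ_mem, (Set.subset_univ S).ssubset_of_ne hS_univ⟩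
  refine ⟨P, hP, hSP, fun Q hQ hSQ => ?_⟩
  obtain ⟨x, hx⟩ := hH.nonempty S hS
  exact (hH.subset_or_subset P hP Q hQ ⟨x, hSP.1 hx, hSQ.1 hx⟩).elim id (hPmin ⟨hQ, hSQ⟩)

open Classical in
noncomputable def parent (S : H) : H :=
  if h : (S : Set X) = Set.univ then S
  else ⟨(hH.exists_least_ssuperset S.2 h).choose, (hH.exists_least_ssuperset S.2 h).choose_spec.1⟩

lemma parent_of_eq_univ {S : H} (h : (S : Set X) = Set.univ) : hH.parent S = S :=
  dif_pos h

lemma ssubset_parent {S : H} (h : (S : Set X) ≠ Set.univ) : (S : Set X) ⊂ hH.parent S := by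
  rw [parent, dif_neg h]
  exact (hH.exists_least_ssuperset S.2 h).choose_spec.2.1

lemma parent_subset {S : H} (h : (S : Set X) ≠ Set.univ) {Q : Set X} (hQ : Q ∈ H)
    (hSQ : (S : Set X) ⊂ Q) : (hH.parent S : Set X) ⊆ Q := by
  rw [parent, dif_neg h]
  exact (hH.exists_least_ssuperset S.2 h).choose_spec.2.2 Q hQ hSQ

lemma subset_parent (S : H) : (S : Set X) ⊆ hH.parent S := by
  by_cases h : (S : Set X) = Set.univ
  · rw [hH.parent_of_eq_univ h]
  · exact (hH.ssubset_parent h).1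

lemma subset_iterate_parent (S : H) (n : ℕ) : (S : Set X) ⊆ hH.parent^[n] S := by
  induction n with
  | zero => exact subset_rfl
  | succ n ih => exact ih.trans (by rw [Function.iterate_succ_apply']; exact hH.subset_parent _)

lemma exists_iterate_parent_eq {u v : H} (h : (v : Set X) ⊆ u) :
    ∃ n, hH.parent^[n] v = u := by
  by_cases heq : (v : Set X) = u
  · exact ⟨0, Subtype.ext heq⟩
  have hv : (v : Set X) ≠ Set.univ := fun hv => heq (hv ▸ (Set.univ_subset_iff.mp (hv ▸ h)).symm)
  have hssub := hH.ssubset_parent hv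
  obtain ⟨n, hn⟩ := exists_iterate_parent_eq
    (hH.parent_subset hv u.2 (h.ssubset_of_ne heq))
  exact ⟨n + 1, hn⟩
termination_by (v : Set X)ᶜ.ncard
decreasing_by exact Set.ncard_lt_ncard (compl_lt_compl_iff_lt.mpr hssub)

/-- A maximal member of `H` strictly inside `v` and containing `x` is a child of `v`. -/
lemma exists_parent_eq {v : H} {x : X} (hx : x ∈ (v : Set X)) (hv : (v : Set X) ≠ {x}) :
    ∃ u : H, hH.parent u = v ∧ x ∈ (u : Set X) ∧ (u : Set X) ⊂ v := by
  obtain ⟨P, ⟨hP, hxP, hPv⟩, hPmax⟩ := Set.toFinite {P | P ∈ H ∧ x ∈ P ∧ P ⊂ v} |>.exists_maximal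
    ⟨{x}, hH.singleton_mem x, rfl, (Set.singleton_subset_iff.mpr hx).ssubset_of_ne hv.symm⟩
  have hP_univ : P ≠ Set.univ := fun h => hPv.2 (h ▸ Set.subset_univ _)
  have hPpar := hH.ssubset_parent (S := ⟨P, hP⟩) hP_univ
  have hpar_v := hH.parent_subset (S := ⟨P, hP⟩) hP_univ v.2 hPv
  refine ⟨⟨P, hP⟩, Subtype.ext (hpar_v.eq_of_not_ssubset fun hlt => ?_), hxP, hPv⟩
  exact hPpar.2 (hPmax ⟨(hH.parent _).2, hPpar.1 hxP, hlt⟩ hPpar.1)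

lemma two_le_ncard_children {v : H} (hv : (v : Set X).Nontrivial) :
    2 ≤ {u : H | hH.parent u = v ∧ u ≠ v}.ncard := by
  obtain ⟨x, hx⟩ := hv.nonempty
  obtain ⟨u₁, hu₁, hxu₁, hu₁v⟩ := hH.exists_parent_eq hx hv.ne_singleton
  obtain ⟨z, hzv, hzu₁⟩ := Set.exists_of_ssubset hu₁v
  obtain ⟨u₂, hu₂, hzu₂, hu₂v⟩ := hH.exists_parent_eq hzv hv.ne_singleton
  refine Set.one_lt_ncard (Set.toFinite _) |>.mpr ⟨u₁, ⟨hu₁, ?_⟩, u₂, ⟨hu₂, ?_⟩, ?_⟩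
  · exact fun h => hu₁v.ne (congrArg Subtype.val h)
  · exact fun h => hu₂v.ne (congrArg Subtype.val h)
  · exact fun h => hzu₁ (h ▸ hzu₂)

lemma eq_singleton_of_parent_eq {u : H} {x : X} (h : hH.parent u = ⟨{x}, hH.singleton_mem x⟩) :
    u = ⟨{x}, hH.singleton_mem x⟩ := by
  have hux : (u : Set X) ⊆ {x} := by simpa [h] using hH.subset_parent u
  exact Subtype.ext ((hH.nonempty u u.2).subset_singleton_iff.mp hux)

noncomputable def toPhyloTree : PhyloTree H X where
  fin := inferInstance
  root := ⟨Set.univ, hH.univ_mem⟩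
  par := hH.parent
  par_root := hH.parent_of_eq_univ rfl
  reach _ := hH.exists_iterate_parent_eq (Set.subset_univ _)
  leaf x := ⟨{x}, hH.singleton_mem x⟩
  leaf_inj _ _ h := Set.singleton_injective (congrArg Subtype.val h)
  leaf_isLeaf _ _ := hH.eq_singleton_of_parent_eq
  leaf_only v hv := by
    obtain ⟨x, hx⟩ := hH.nonempty v v.2
    by_contra hleaf
    have hvx : (v : Set X) ≠ {x} := fun h => hleaf ⟨x, Subtype.ext h.symm⟩
    obtain ⟨u, hu, -, huv⟩ := hH.exists_parent_eq hx hvx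
    exact huv.ne (congrArg Subtype.val (hv u hu))
  root_deg := by
    obtain ⟨x, hx⟩ := hH.nonempty _ hH.univ_mem
    exact (Set.Nonempty.exists_eq_singleton_or_nontrivial ⟨x, hx⟩).imp
      (fun ⟨y, hy⟩ => ⟨y, Subtype.ext hy.symm⟩) hH.two_le_ncard_children
  inner_deg v _ hleaf := hH.two_le_ncard_children <|
    (hH.nonempty v v.2).exists_eq_singleton_or_nontrivial.resolve_left
      fun ⟨x, hx⟩ => hleaf ⟨x, Subtype.ext hx.symm⟩

lemma anc_toPhyloTree_iff {u v : H} : hH.toPhyloTree.anc u v ↔ (v : Set X) ⊆ u :=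
  ⟨fun ⟨n, hn⟩ => hn ▸ hH.subset_iterate_parent v n, hH.exists_iterate_parent_eq⟩

lemma cluster_toPhyloTree (v : H) : hH.toPhyloTree.cluster v = v := by
  ext x
  exact hH.anc_toPhyloTree_iff.trans Set.singleton_subset_iff

lemma displays_toPhyloTree_iff (a b c : X) :
    hH.toPhyloTree.Displays a b c ↔ ∃ S ∈ H, a ∈ S ∧ b ∈ S ∧ c ∉ S := by
  simp only [PhyloTree.displays_iff_exists_cluster, cluster_toPhyloTree, Subtype.exists,
    exists_prop]

end IsHierarchy

section Fitch

variable {V X M : Type} {T : PhyloTree V X} {lab : V → Set M} {ε : X → X → Set M}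

open PhyloTree

theorem Explains.nbr_mem_clusterSet (hE : Explains T lab ε) (m : M) (y : X) :
    Nbr ε m y ∈ T.clusterSet := by
  obtain ⟨v, hvy, hv, hmin⟩ := T.exists_lowest_anc (fun u => m ∈ lab u) (T.leaf y)
  refine ⟨v, Set.ext fun x => ?_⟩
  rcases eq_or_ne x y with rfl | hxy
  · simpa [Nbr, cluster] using hvy
  obtain ⟨l, hl⟩ := T.exists_isLca (T.leaf x) (T.leaf y)
  have hl_iff : ∀ l', T.IsLca l' (T.leaf x) (T.leaf y) ↔ l' = l :=
    fun l' => ⟨fun h => h.unique hl, fun h => h ▸ hl⟩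
  simp only [Nbr, Set.mem_union, Set.mem_ofPred_eq, Set.mem_singleton_iff, hxy, ne_eq,
    not_false_eq_true, true_and, or_false, hE x y hxy m, hl_iff, exists_eq_left]
  constructor
  · intro hnot
    by_contra hvx
    have hvl : ¬ T.anc v l := fun h => hvx (anc_trans h hl.1)
    have hlv : T.anc l v := (anc_total_of_anc hl.2.1 hvy).resolve_right hvl
    have hmv : m ∈ lab v := hv.resolve_right fun h => hvl (h ▸ T.anc_root l)
    exact hnot ⟨v, ⟨hlv, fun h => hvl (h ▸ T.anc_refl l), hvy⟩, hmv⟩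
  · rintro hvx ⟨u, ⟨hlu, hul, huy⟩, hmu⟩
    exact hul (anc_antisymm (anc_trans (hmin u huy hmu) (hl.2.2 v hvx hvy)) hlu)

def nbrHierarchy (ε : X → X → Set M) : Set (Set X) :=
  insert Set.univ (NbrSet ε ∪ Set.range singleton)

theorem Explains.nbrHierarchy_subset_clusterSet (hE : Explains T lab ε) :
    nbrHierarchy ε ⊆ T.clusterSet := by
  rintro S (rfl | ⟨m, y, rfl⟩ | ⟨x, rfl⟩)
  · exact ⟨T.root, T.cluster_root.symm⟩
  · exact hE.nbr_mem_clusterSet m y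
  · exact ⟨T.leaf x, (T.cluster_leaf x).symm⟩

theorem Explains.isHierarchy_nbrHierarchy [Nonempty X] (hE : Explains T lab ε) :
    IsHierarchy (nbrHierarchy ε) where
  nonempty := by
    rintro S (rfl | ⟨m, y, rfl⟩ | ⟨x, rfl⟩)
    · exact Set.univ_nonempty
    · exact ⟨y, .inr rfl⟩
    · exact Set.singleton_nonempty x
  univ_mem := Set.mem_insert _ _
  singleton_mem x := .inr (.inr ⟨x, rfl⟩)
  subset_or_subset S hS S' hS' h := by
    obtain ⟨u, rfl⟩ := hE.nbrHierarchy_subset_clusterSet hS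
    obtain ⟨v, rfl⟩ := hE.nbrHierarchy_subset_clusterSet hS'
    exact T.cluster_subset_or_subset h

end Fitch

theorem triple_set_closed_general {X M : Type} (ε : X → X → Set M) (h : IsFitchMap ε) :
    ∀ a b c : X, a ≠ b → a ≠ c → b ≠ c →
      ((∀ (V : Type) (T : PhyloTree V X),
          (∀ a' b' c' : X, TripleRel ε a' b' c' → T.Displays a' b' c') →
          T.Displays a b c)
        ↔ TripleRel ε a b c) := by
  obtain ⟨V, T, lab, hE⟩ := h
  intro a b c hab _ _
  refine ⟨fun hclosed => ?_, fun hR _ _ hT => hT a b c hR⟩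
  have : Finite X := T.finite_leaves
  have : Nonempty X := ⟨a⟩
  have hH := hE.isHierarchy_nbrHierarchy
  have hdisplays : ∀ a' b' c', TripleRel ε a' b' c' → hH.toPhyloTree.Displays a' b' c' :=
    fun a' b' c' ⟨_, N, hN, hsep⟩ =>
      (hH.displays_toPhyloTree_iff a' b' c').mpr ⟨N, .inr (.inl hN), hsep⟩
  obtain ⟨S, hS, haS, hbS, hcS⟩ := (hH.displays_toPhyloTree_iff a b c).mp (hclosed _ _ hdisplays)
  rcases hS with rfl | hS | ⟨x, rfl⟩
  · exact absurd (Set.mem_univ c) hcS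
  · exact ⟨hab, S, hS, haS, hbS, hcS⟩
  · exact absurd (haS.trans hbS.symm) hab

/-- for a Fitch map `ε`, the triple set `R(ε)` is closed: a triple `ab|c`
(on pairwise distinct leaves) is displayed by every tree displaying `R(ε)` iff it lies
in `R(ε)`. -/
theorem triple_set_closed {X M : Type} [Fintype X] [Fintype M] [Nonempty X] [Nonempty M]
    (ε : X → X → Set M) (h : IsFitchMap ε) :
    ∀ a b c : X, a ≠ b → a ≠ c → b ≠ c →
      ((∀ (V : Type) (T : PhyloTree V X),
          (∀ a' b' c' : X, TripleRel ε a' b' c' → T.Displays a' b' c') →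
          T.Displays a b c)
        ↔ TripleRel ε a b c) :=
  triple_set_closed_general ε h
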